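/- arXiv:2006.04574 — 3 statements merged into one kernel-verified Lean document; each statement's English description precedes it below -/
import Mathlib

section
/- Let F be a finite nonempty set with |F| = m and let v : Finset F → ℝ be a positive cooperative game (v(S) > 0 for every S ⊆ F). Define for each j ∈ F the multiplicative Shapley value ψ^j(v) = exp( Σ_{c ⊆ F \ {j}} (|c|!·(m−|c|−1)!/m!) · (log v(c ∪ {j}) − log v(c)) ). Then the multiplicative Shapley values are geometrically efficient: v(∅) · ∏_{j ∈ F} ψ^j(v) = v(F). -/
/-!
`log ψ^j(v)` is the additive Shapley value of `f = log v`, so geometric efficiency is the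
efficiency `∑ j, φ_j(f) = f F - f ∅` of the Shapley value. Regrouping the double sum by
coalitions `S`, the value `f S` is counted with coefficient `|S| · w(|S| - 1) - (m - |S|) · w(|S|)`;
each product is `1 / C(m, |S|)` unless it is killed by a zero factor, so everything cancels except
`+f F` and `-f ∅`.
-/

open Finset
open scoped Nat

noncomputable def shapleyWeight (m k : ℕ) : ℝ := (k ! * (m - k - 1)! : ℝ) / m !

lemma card_mul_shapleyWeight_pred {m s : ℕ} (hs : 0 < s) (hsm : s ≤ m) :
    (s : ℝ) * shapleyWeight m (s - 1) = ((m.choose s : ℕ) : ℝ)⁻¹ := by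
  have hfac : (s : ℝ) * (s - 1)! = s ! := by exact_mod_cast Nat.mul_factorial_pred hs.ne'
  rw [shapleyWeight, Nat.cast_choose ℝ hsm, inv_div, show m - (s - 1) - 1 = m - s by omega,
    ← mul_div_assoc, ← mul_assoc, hfac]

lemma sub_mul_shapleyWeight {m s : ℕ} (hsm : s < m) :
    ((m - s : ℕ) : ℝ) * shapleyWeight m s = ((m.choose s : ℕ) : ℝ)⁻¹ := by
  have hfac : ((m - s : ℕ) : ℝ) * (m - s - 1)! = (m - s)! := by
    exact_mod_cast Nat.mul_factorial_pred (by omega)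
  rw [shapleyWeight, Nat.cast_choose ℝ hsm.le, inv_div, ← mul_div_assoc, mul_left_comm, hfac]

lemma card_mul_shapleyWeight_pred_sub {m s : ℕ} (hsm : s ≤ m) :
    (s : ℝ) * shapleyWeight m (s - 1) - ((m - s : ℕ) : ℝ) * shapleyWeight m s =
      (if s = m then 1 else 0) - (if s = 0 then 1 else 0) := by
  rcases Nat.eq_zero_or_pos s with rfl | hs
  · rcases Nat.eq_zero_or_pos m with rfl | hm
    · simp
    · simpa [hm.ne] using sub_mul_shapleyWeight hm
  · rcases hsm.eq_or_lt with rfl | hsm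
    · simp [card_mul_shapleyWeight_pred hs le_rfl, hs.ne']
    · simp [card_mul_shapleyWeight_pred hs hsm.le, sub_mul_shapleyWeight hsm, hsm.ne, hs.ne']

section ShapleyValue

variable {F M : Type*} [Fintype F] [DecidableEq F] [AddCommMonoid M]

lemma sum_powerset_erase_insert (j : F) (h : ℕ → Finset F → M) :
    ∑ c ∈ (univ.erase j).powerset, h c.card (insert j c) =
      ∑ S : Finset F, if j ∈ S then h (S.card - 1) S else 0 := by
  rw [← sum_filter]
  refine sum_nbij' (insert j) (erase · j) ?_ ?_ ?_ ?_ ?_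
  · simp
  · simp [subset_erase]
  · intro c hc
    simp_all [subset_erase]
  · intro S hS
    simp_all
  · intro c hc
    simp_all [subset_erase]

lemma sum_sum_powerset_erase_insert (h : ℕ → Finset F → M) :
    ∑ j : F, ∑ c ∈ (univ.erase j).powerset, h c.card (insert j c) =
      ∑ S : Finset F, S.card • h (S.card - 1) S := by
  simp_rw [sum_powerset_erase_insert, sum_comm (γ := F), sum_ite_mem, univ_inter, sum_const]

lemma sum_sum_powerset_erase (g : Finset F → M) :
    ∑ j : F, ∑ c ∈ (univ.erase j).powerset, g c =
      ∑ S : Finset F, (Fintype.card F - S.card) • g S := by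
  have hmem (j : F) : (univ.erase j).powerset = univ.filter (j ∉ ·) := by
    ext c; simp [subset_erase]
  simp_rw [hmem, sum_filter, sum_comm (γ := F), ← mem_compl, sum_ite_mem, univ_inter, sum_const,
    card_compl]

noncomputable def shapleyValue (f : Finset F → ℝ) (j : F) : ℝ :=
  ∑ c ∈ (univ.erase j).powerset, shapleyWeight (Fintype.card F) c.card * (f (insert j c) - f c)

theorem sum_shapleyValue (f : Finset F → ℝ) : ∑ j, shapleyValue f j = f univ - f ∅ := by
  unfold shapleyValue
  set m := Fintype.card F
  have hcoeff (S : Finset F) :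
      (S.card : ℝ) * shapleyWeight m (S.card - 1) - ((m - S.card : ℕ) : ℝ) * shapleyWeight m S.card
        = (if S = univ then 1 else 0) - (if S = ∅ then 1 else 0) := by
    rw [card_mul_shapleyWeight_pred_sub (card_le_univ S)]
    simp only [card_eq_iff_eq_univ, Finset.card_eq_zero]
  calc ∑ j : F, ∑ c ∈ (univ.erase j).powerset, shapleyWeight m c.card * (f (insert j c) - f c)
      = ∑ j : F, ∑ c ∈ (univ.erase j).powerset, shapleyWeight m c.card * f (insert j c)
          - ∑ j : F, ∑ c ∈ (univ.erase j).powerset, shapleyWeight m c.card * f c := by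
        simp only [mul_sub, sum_sub_distrib]
    _ = ∑ S : Finset F, S.card • (shapleyWeight m (S.card - 1) * f S)
          - ∑ S : Finset F, (m - S.card) • (shapleyWeight m S.card * f S) := by
        rw [sum_sum_powerset_erase_insert (fun k S => shapleyWeight m k * f S),
          sum_sum_powerset_erase (fun S => shapleyWeight m S.card * f S)]
    _ = ∑ S : Finset F, ((if S = univ then 1 else 0) - (if S = ∅ then 1 else 0)) * f S := by
        simp only [← hcoeff, ← sum_sub_distrib, nsmul_eq_mul, sub_mul, mul_assoc]
    _ = f univ - f ∅ := by
        simp [sub_mul, sum_sub_distrib]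

end ShapleyValue

theorem xshap_geometric_efficiency_general
    {F : Type*} [Fintype F] [DecidableEq F]
    (v : Finset F → ℝ) (hv : ∀ S : Finset F, 0 < v S) :
    v ∅ *
      ∏ j : F,
        Real.exp (∑ c ∈ (Finset.univ.erase j).powerset,
          ((Nat.factorial c.card * Nat.factorial (Fintype.card F - c.card - 1) : ℝ) /
            Nat.factorial (Fintype.card F)) *
          (Real.log (v (insert j c)) - Real.log (v c)))
      = v Finset.univ := by
  change v ∅ * ∏ j, Real.exp (shapleyValue (fun S => Real.log (v S)) j) = v univ
  rw [← Real.exp_sum, sum_shapleyValue, Real.exp_sub, Real.exp_log (hv _), Real.exp_log (hv _),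
    mul_div_cancel₀ _ (hv ∅).ne']

/-- **Geometric efficiency of multiplicative Shapley values** (existence/local-accuracy
part of Theorem 1). For a positive cooperative game `v` on a finite nonempty set `F`
with `|F| = m`, the multiplicative Shapley values
`ψ^j(v) = exp(∑_{c ⊆ F \ {j}} (|c|!·(m−|c|−1)!/m!)·(log v(c ∪ {j}) − log v(c)))`
satisfy `v(∅) · ∏_{j ∈ F} ψ^j(v) = v(F)`. -/
theorem xshap_geometric_efficiency
    {F : Type*} [Fintype F] [DecidableEq F] [Nonempty F]
    (v : Finset F → ℝ) (hv : ∀ S : Finset F, 0 < v S) :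
    v ∅ *
      ∏ j : F,
        Real.exp (∑ c ∈ (Finset.univ.erase j).powerset,
          ((Nat.factorial c.card * Nat.factorial (Fintype.card F - c.card - 1) : ℝ) /
            Nat.factorial (Fintype.card F)) *
          (Real.log (v (insert j c)) - Real.log (v c)))
      = v Finset.univ :=
  xshap_geometric_efficiency_general v hv
end

section
/- Let F be a finite set and let v : Finset F → ℝ be a positive cooperative game. For every nonempty subset S ⊆ F and every j ∈ S, let ψ^j(v, S) = exp( Σ_{c ⊆ S \ {j}} (|c|!·(|S|−|c|−1)!/|S|!) · (log v(c ∪ {j}) − log v(c)) ) be the multiplicative Shapley value of j computed within S. Then the multiplicative Shapley values preserve ratios: for every S ⊆ F and all distinct j₁, j₂ ∈ S, ψ^{j₁}(v, S) / ψ^{j₁}(v, S \ {j₂}) = ψ^{j₂}(v, S) / ψ^{j₂}(v, S \ {j₁}). -/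
/-- The multiplicative Shapley value of feature `j` computed within the coalition `S`
for the game `v`:
`ψ^j(v, S) = exp(∑_{c ⊆ S \ {j}} (|c|!·(|S|−|c|−1)!/|S|!)·(log v(c ∪ {j}) − log v(c)))`. -/
noncomputable def multShapley {F : Type*} [DecidableEq F]
    (v : Finset F → ℝ) (S : Finset F) (j : F) : ℝ :=
  Real.exp (∑ c ∈ (S.erase j).powerset,
    ((Nat.factorial c.card * Nat.factorial (S.card - c.card - 1) : ℝ) /
      Nat.factorial S.card) *
    (Real.log (v (insert j c)) - Real.log (v c)))

lemma coeff_id (k m : ℕ) :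
    ((Nat.factorial k * Nat.factorial (m+1) : ℝ) / Nat.factorial (k+m+2))
  + ((Nat.factorial (k+1) * Nat.factorial m : ℝ) / Nat.factorial (k+m+2))
  = ((Nat.factorial k * Nat.factorial m : ℝ) / Nat.factorial (k+m+1)) := by
  have h1 : Nat.factorial (k+m+2) = (k+m+2) * Nat.factorial (k+m+1) := Nat.factorial_succ _
  have h2 : Nat.factorial (m+1) = (m+1) * Nat.factorial m := Nat.factorial_succ _
  have h3 : Nat.factorial (k+1) = (k+1) * Nat.factorial k := Nat.factorial_succ _
  have hpos : (0:ℝ) < Nat.factorial (k+m+1) := by exact_mod_cast Nat.factorial_pos _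
  rw [h1, h2, h3]
  push_cast
  field_simp
  ring

/-- **Preserving-ratios property of multiplicative Shapley values** (Property 2 of
Theorem 1): for every `S ⊆ F` and distinct `j₁, j₂ ∈ S`,
`ψ^{j₁}(v,S)/ψ^{j₁}(v,S\{j₂}) = ψ^{j₂}(v,S)/ψ^{j₂}(v,S\{j₁})`. -/
theorem xshap_preserving_ratios
    {F : Type*} [Fintype F] [DecidableEq F]
    (v : Finset F → ℝ) (hv : ∀ S : Finset F, 0 < v S)
    (S : Finset F) (j₁ j₂ : F) (h₁ : j₁ ∈ S) (h₂ : j₂ ∈ S) (hne : j₁ ≠ j₂) :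
    multShapley v S j₁ / multShapley v (S.erase j₂) j₁ =
      multShapley v S j₂ / multShapley v (S.erase j₁) j₂ := by
  classical
  unfold multShapley
  rw [← Real.exp_sub, ← Real.exp_sub, Real.exp_eq_exp]
  have hn : 2 ≤ S.card := Finset.one_lt_card.mpr ⟨j₁, h₁, j₂, h₂, hne⟩
  set T := (S.erase j₁).erase j₂ with hT
  have hTT' : (S.erase j₂).erase j₁ = T := Finset.erase_right_comm
  have hj2T : j₂ ∉ T := Finset.notMem_erase _ _
  have hj1T : j₁ ∉ T := by
    intro h
    exact Finset.notMem_erase j₁ S (Finset.mem_of_mem_erase h)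
  have hj2e : j₂ ∈ S.erase j₁ := Finset.mem_erase.mpr ⟨hne.symm, h₂⟩
  have hj1e : j₁ ∈ S.erase j₂ := Finset.mem_erase.mpr ⟨hne, h₁⟩
  have e1 : S.erase j₁ = insert j₂ T := (Finset.insert_erase hj2e).symm
  have e2 : S.erase j₂ = insert j₁ T := by rw [← hTT', Finset.insert_erase hj1e]
  have hc2 : (S.erase j₂).card = S.card - 1 := Finset.card_erase_of_mem h₂
  have hc1 : (S.erase j₁).card = S.card - 1 := Finset.card_erase_of_mem h₁
  have hTcard : T.card = S.card - 2 := by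
    rw [hT, Finset.card_erase_of_mem hj2e, hc1]; omega
  rw [hTT', hc2, hc1, e1, e2,
    Finset.sum_powerset_insert hj2T, Finset.sum_powerset_insert hj1T,
    ← Finset.sum_add_distrib, ← Finset.sum_sub_distrib,
    ← Finset.sum_add_distrib, ← Finset.sum_sub_distrib]
  apply Finset.sum_congr rfl
  intro c hc
  have hcT : c ⊆ T := Finset.mem_powerset.mp hc
  have hj1c : j₁ ∉ c := fun h => hj1T (hcT h)
  have hj2c : j₂ ∉ c := fun h => hj2T (hcT h)
  have hck2 : (insert j₂ c).card = c.card + 1 := Finset.card_insert_of_notMem hj2c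
  have hck1 : (insert j₁ c).card = c.card + 1 := Finset.card_insert_of_notMem hj1c
  have hicomm : insert j₁ (insert j₂ c) = insert j₂ (insert j₁ c) := Finset.insert_comm _ _ _
  have hkle : c.card ≤ S.card - 2 := hTcard ▸ Finset.card_le_card hcT
  obtain ⟨m, hm⟩ : ∃ m, S.card = c.card + m + 2 := ⟨S.card - c.card - 2, by omega⟩
  rw [hck1, hck2, hicomm, hm]
  have r1 : c.card + m + 2 - c.card - 1 = m + 1 := by omega
  have r2 : c.card + m + 2 - (c.card + 1) - 1 = m := by omega
  have r3 : c.card + m + 2 - 1 - c.card - 1 = m := by omega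
  have r4 : c.card + m + 2 - 1 = c.card + m + 1 := by omega
  rw [r1, r2, r3, r4]
  have key := coeff_id c.card m
  linear_combination (Real.log (v (insert j₁ c)) - Real.log (v (insert j₂ c))) * key
end

section
/- Let F = {1,…,m} with m ≥ 1, let α ∈ ℝ, β ∈ ℝ^m, let x ∈ ℝ^m be an observation and μ ∈ ℝ^m a vector of reference (mean) feature values. Define the positive cooperative game v : Finset F → ℝ by v(c) = exp(α) · ∏_{j ∈ c} exp(β_j · x_j) · ∏_{j ∈ F \ c} exp(β_j · μ_j), i.e. the log-GLM prediction where absent features are replaced by their reference values. Then for every j ∈ F, the multiplicative Shapley value ψ^j(v) = exp( Σ_{c ⊆ F \ {j}} (|c|!·(m−|c|−1)!/m!) · (log v(c ∪ {j}) − log v(c)) ) equals exp( β_j · (x_j − μ_j) ); moreover v(∅) = exp(α) · ∏_{j=1}^m exp(β_j μ_j) and v(F) = exp(α) · ∏_{j=1}^m exp(β_j x_j). -/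
open Finset

lemma shapley_weight_sum (m : ℕ) (hm : 1 ≤ m) (j : Fin m) :
    ∑ c ∈ (Finset.univ.erase j).powerset,
      ((Nat.factorial c.card * Nat.factorial (m - c.card - 1) : ℝ) /
        Nat.factorial m) = 1 := by
  have hcard : (Finset.univ.erase j).card = m - 1 := by
    rw [card_erase_of_mem (mem_univ j), card_univ, Fintype.card_fin]
  rw [Finset.sum_powerset, hcard]
  have : ∀ k ∈ Finset.range (m - 1 + 1),
      (∑ c ∈ Finset.powersetCard k (Finset.univ.erase j),
        ((Nat.factorial c.card * Nat.factorial (m - c.card - 1) : ℝ) /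
          Nat.factorial m)) = (1 : ℝ) / m := by
    intro k hk
    rw [Finset.mem_range] at hk
    have hk' : k ≤ m - 1 := Nat.lt_succ_iff.mp hk
    have hcardc : ∀ c ∈ Finset.powersetCard k (Finset.univ.erase j), c.card = k :=
      fun c hc => (Finset.mem_powersetCard.mp hc).2
    rw [Finset.sum_congr rfl (fun c hc => by rw [hcardc c hc])]
    rw [Finset.sum_const, Finset.card_powersetCard, hcard, nsmul_eq_mul]
    have hchoose : ((m - 1).choose k : ℝ) * k.factorial * (m - k - 1).factorial
        = (m - 1).factorial := by
      have h1 : m - k - 1 = (m - 1) - k := by omega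
      rw [h1]
      have := Nat.choose_mul_factorial_mul_factorial hk'
      exact_mod_cast congrArg (Nat.cast (R := ℝ)) this
    have hm0 : (m : ℝ) ≠ 0 := Nat.cast_ne_zero.mpr (by omega)
    have hmf : (Nat.factorial m : ℝ) ≠ 0 := Nat.cast_ne_zero.mpr m.factorial_ne_zero
    have hmfac : (Nat.factorial m : ℝ) = m * (m - 1).factorial := by
      have hn : Nat.factorial m = m * Nat.factorial (m - 1) := by
        conv_lhs => rw [show m = m - 1 + 1 from by omega]
        rw [Nat.factorial_succ, show m - 1 + 1 = m from by omega]
      exact_mod_cast congrArg (Nat.cast (R := ℝ)) hn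
    field_simp
    rw [hmfac]
    nlinarith [hchoose]
  rw [Finset.sum_congr rfl this, Finset.sum_const, Finset.card_range, nsmul_eq_mul]
  have : (m - 1 + 1 : ℕ) = m := by omega
  rw [this]
  field_simp

/-- **Proposition 1**: for the positive cooperative game induced by a log-GLM, where
`v(c) = exp(α) · ∏_{j ∈ c} exp(β_j·x_j) · ∏_{j ∉ c} exp(β_j·μ_j)` (absent features
replaced by their reference values), the multiplicative Shapley value of each feature
`j` equals `exp(β_j · (x_j − μ_j))`; moreover `v(∅) = exp(α) · ∏_j exp(β_j·μ_j)` and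
`v(F) = exp(α) · ∏_j exp(β_j·x_j)`. -/
theorem xshap_logGLM
    (m : ℕ) (hm : 1 ≤ m) (α : ℝ) (β x μ : Fin m → ℝ)
    (v : Finset (Fin m) → ℝ)
    (hv : ∀ c : Finset (Fin m),
      v c = Real.exp α * (∏ j ∈ c, Real.exp (β j * x j)) *
        ∏ j ∈ cᶜ, Real.exp (β j * μ j)) :
    (∀ j : Fin m,
      Real.exp (∑ c ∈ (Finset.univ.erase j).powerset,
        ((Nat.factorial c.card * Nat.factorial (m - c.card - 1) : ℝ) /
          Nat.factorial m) *
        (Real.log (v (insert j c)) - Real.log (v c)))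
        = Real.exp (β j * (x j - μ j)))
    ∧ v ∅ = Real.exp α * ∏ j : Fin m, Real.exp (β j * μ j)
    ∧ v Finset.univ = Real.exp α * ∏ j : Fin m, Real.exp (β j * x j) := by
  have hlog : ∀ c : Finset (Fin m), Real.log (v c) =
      α + (∑ j ∈ c, β j * x j) + ∑ j ∈ cᶜ, β j * μ j := by
    intro c
    rw [hv c, ← Real.exp_sum, ← Real.exp_sum, ← Real.exp_add, ← Real.exp_add,
      Real.log_exp]
  refine ⟨?_, ?_, ?_⟩
  · intro j
    congr 1
    have hdiff : ∀ c ∈ (Finset.univ.erase j).powerset,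
        Real.log (v (insert j c)) - Real.log (v c) = β j * (x j - μ j) := by
      intro c hc
      rw [Finset.mem_powerset] at hc
      have hj : j ∉ c := fun h => (Finset.mem_erase.mp (hc h)).1 rfl
      have hjc : j ∈ cᶜ := Finset.mem_compl.mpr hj
      rw [hlog, hlog]
      have h1 : (∑ i ∈ insert j c, β i * x i) = β j * x j + ∑ i ∈ c, β i * x i :=
        Finset.sum_insert hj
      have h2 : (insert j c)ᶜ = cᶜ.erase j := by
        ext i; simp [Finset.mem_compl, Finset.mem_erase, Finset.mem_insert,
          not_or, and_comm]
      have h3 : (∑ i ∈ cᶜ, β i * μ i) = β j * μ j + ∑ i ∈ cᶜ.erase j, β i * μ i := by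
        exact (Finset.add_sum_erase _ _ hjc).symm
      rw [h1, h2, h3]
      ring
    rw [Finset.sum_congr rfl (fun c hc => by rw [hdiff c hc]), ← Finset.sum_mul,
      shapley_weight_sum m hm j, one_mul]
  · rw [hv ∅]
    simp
  · rw [hv Finset.univ]
    simp
end
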